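/- arXiv:1711.00301 — 3 statements merged into one kernel-verified Lean document; each statement's English description precedes it below -/
import Mathlib

section
/- Let n be a positive integer. For every fixed w ∈ U and every R > 0, the Lebesgue measure of the set {z ∈ U : |ρ(z,w)| < R} is at most (2^{n+1} π^n / (n−1)!) · R^{n+1}. -/
/-!
With `ρ(z) = Im z_n − |z'|²`, one has `2 Re ρ(z,w) = ρ(z) + ρ(w) + |z' − w'|²`, and `ρ > 0` on `U`.
So on `{|ρ(·,w)| < R}` we get `|z' − w'|² < 2R` and `0 < ρ(z) < 2R`, while `|Im ρ(z,w)| < R`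
pins `Re z_n` to an interval of length `4R` once `z'` is fixed. Fubini bounds the volume by
`8R² · (2πR)^{n-1}/(n-1)!`, which is at most the claimed bound since `2 ≤ π`.
-/

open MeasureTheory Complex Real ENNReal

noncomputable section

/-- We model `ℂ^n` (with `n ≥ 1`) as `ℂ^{n-1} × ℂ`, writing `z = (z', z_n)`. -/
abbrev SiegelSpace (n : ℕ) := (Fin (n - 1) → ℂ) × ℂ

/-- The Siegel upper half-space `U = {z : Im z_n > |z'|²}`. -/
def siegelDomain (n : ℕ) : Set (SiegelSpace n) :=
  {z | ∑ k, ‖z.1 k‖ ^ 2 < z.2.im}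

/-- `ρ(z,w) = (i/2)(conj w_n − z_n) − ⟨z', w'⟩`. -/
def siegelRho (n : ℕ) (z w : SiegelSpace n) : ℂ :=
  Complex.I / 2 * ((starRingEnd ℂ) w.2 - z.2) - ∑ k, z.1 k * (starRingEnd ℂ) (w.1 k)

/-- `ρ(w) = ρ(w,w) = Im w_n − |w'|²`, as a real number. -/
def siegelRhoSelf (n : ℕ) (w : SiegelSpace n) : ℝ :=
  w.2.im - ∑ k, ‖w.1 k‖ ^ 2

/-- Lebesgue measure restricted to the Siegel upper half-space. -/
def siegelMeasure (n : ℕ) : Measure (SiegelSpace n) := volume.restrict (siegelDomain n)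

/-- The Bergman-type operator `T_α f(z) = ∫_U f(w) ρ(z,w)^{-α} dV(w)`. -/
def Talpha (n : ℕ) (α : ℝ) (f : SiegelSpace n → ℂ) (z : SiegelSpace n) : ℂ :=
  ∫ w in siegelDomain n, f w / siegelRho n z w ^ (α : ℂ)

/-- `T_α` is bounded from `L^p(U)` to `L^q(U)`: there is `C > 0` such that for every
`f ∈ L^p(U)` the defining integral converges absolutely for a.e. `z ∈ U` and
`‖T_α f‖_q ≤ C ‖f‖_p`. -/
def TalphaBounded (n : ℕ) (α : ℝ) (p q : ℝ≥0∞) : Prop :=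
  ∃ C : ℝ, 0 < C ∧ ∀ f : SiegelSpace n → ℂ, MemLp f p (siegelMeasure n) →
    (∀ᵐ z ∂(siegelMeasure n),
      IntegrableOn (fun w => f w / siegelRho n z w ^ (α : ℂ)) (siegelDomain n)) ∧
    eLpNorm (Talpha n α f) q (siegelMeasure n) ≤
      ENNReal.ofReal C * eLpNorm f p (siegelMeasure n)

/-- The operator `S_α f(z) = ∫_U f(w) |ρ(z,w)|^{-α} dV(w)`. -/
def Salpha (n : ℕ) (α : ℝ) (f : SiegelSpace n → ℂ) (z : SiegelSpace n) : ℂ :=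
  ∫ w in siegelDomain n, f w / ((‖siegelRho n z w‖ ^ α : ℝ) : ℂ)

/-- `S_α` is bounded from `L^p(U)` to `L^q(U)`. -/
def SalphaBounded (n : ℕ) (α : ℝ) (p q : ℝ≥0∞) : Prop :=
  ∃ C : ℝ, 0 < C ∧ ∀ f : SiegelSpace n → ℂ, MemLp f p (siegelMeasure n) →
    (∀ᵐ z ∂(siegelMeasure n),
      IntegrableOn (fun w => f w / ((‖siegelRho n z w‖ ^ α : ℝ) : ℂ))
        (siegelDomain n)) ∧
    eLpNorm (Salpha n α f) q (siegelMeasure n) ≤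
      ENNReal.ofReal C * eLpNorm f p (siegelMeasure n)

/-- The point `𝐢 = (0', i) ∈ U`. -/
def siegelPt (n : ℕ) : SiegelSpace n := (0, Complex.I)

/-- The dilation `t ∘ z = (t z', t² z_n)`. -/
def dilate (n : ℕ) (t : ℝ) (z : SiegelSpace n) : SiegelSpace n :=
  (fun k => t * z.1 k, t ^ 2 * z.2)

/-- The weak-`L^r` quasinorm `‖f‖_{L^{r,∞}(U)} = sup_{λ>0} λ |{z ∈ U : |f z| > λ}|^{1/r}`. -/
def weakNorm (n : ℕ) (r : ℝ) (f : SiegelSpace n → ℂ) : ℝ≥0∞ :=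
  ⨆ (lam : ℝ) (_ : 0 < lam), ENNReal.ofReal lam *
    volume {z | z ∈ siegelDomain n ∧ lam < ‖f z‖} ^ (1 / r)

/-- The affine self-map of `U` associated to the Heisenberg group element `[ζ, t]`:
`h(z', z_n) = (z' + ζ, z_n + t + 2i⟨z', ζ⟩ + i|ζ|²)`. -/
def heis (n : ℕ) (ζ : Fin (n - 1) → ℂ) (t : ℝ) (z : SiegelSpace n) : SiegelSpace n :=
  (z.1 + ζ,
    z.2 + t + 2 * Complex.I * ∑ k, z.1 k * (starRingEnd ℂ) (ζ k)
      + Complex.I * ((∑ k, ‖ζ k‖ ^ 2 : ℝ) : ℂ))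

open Set

lemma Complex.volume_reProdIm (s t : Set ℝ) : volume (s ×ℂ t) = volume s * volume t := by
  rw [← preimage_equivRealProd_prod]
  exact (volume_preserving_equiv_real_prod.measure_preimage_equiv _).trans (Measure.prod_prod s t)

lemma MeasureTheory.Measure.prod_le_mul_of_forall_slice_le {α β : Type*} [MeasurableSpace α]
    [MeasurableSpace β] {μ : Measure α} {ν : Measure β} {s : Set (α × β)} (hs : MeasurableSet s)
    {t : Set α} {c : ℝ≥0∞} (h_fst : ∀ p ∈ s, p.1 ∈ t) (h_slice : ∀ x ∈ t, ν (Prod.mk x ⁻¹' s) ≤ c) :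
    μ.prod ν s ≤ c * μ t := by
  refine (Measure.prod_apply_le hs).trans <| le_trans (lintegral_mono fun x => ?_)
    (lintegral_indicator_const_le t c)
  by_cases hx : x ∈ t
  · simpa [hx] using h_slice x hx
  · have : Prod.mk x ⁻¹' s = ∅ := eq_empty_of_forall_notMem fun y hy => hx (h_fst _ hy)
    simp [hx, this]

open Pointwise in
lemma Complex.volume_sum_norm_sub_sq_lt {ι : Type*} [Fintype ι] (c : ι → ℂ) {r : ℝ} (hr : 0 < r) :
    volume {x : ι → ℂ | ∑ k, ‖x k - c k‖ ^ 2 < r} =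
      ENNReal.ofReal (r ^ Fintype.card ι * π ^ Fintype.card ι / (Fintype.card ι).factorial) := by
  have hsqrt : 0 < √r := Real.sqrt_pos.mpr hr
  have hunit : {x : ι → ℂ | ∑ k, ‖x k‖ ^ 2 < r} = √r • {x | ∑ k, ‖x k‖ ^ (2 : ℝ) < 1} := by
    ext x
    simp only [mem_smul_set_iff_inv_smul_mem₀ hsqrt.ne', mem_ofPred_eq, Pi.smul_apply, norm_smul,
      norm_inv, Real.norm_eq_abs, abs_of_pos hsqrt, Real.rpow_two, mul_pow, ← Finset.mul_sum,
      inv_pow, Real.sq_sqrt hr.le, inv_mul_lt_iff₀ hr, mul_one]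
  have htrans : {x : ι → ℂ | ∑ k, ‖x k - c k‖ ^ 2 < r} =
      (· + -c) ⁻¹' {x | ∑ k, ‖x k‖ ^ 2 < r} := by
    simp only [← sub_eq_add_neg]; rfl
  have hdim : Module.finrank ℝ (ι → ℂ) = 2 * Fintype.card ι := by
    simp [Module.finrank_pi_fintype ℝ, Complex.finrank_real_complex, mul_comm]
  have hΓ : Real.Gamma (2 * Fintype.card ι / 2 + 1) = (Fintype.card ι).factorial := by
    rw [mul_div_cancel_left₀ _ two_ne_zero, Real.Gamma_nat_eq_factorial]
  rw [htrans, measure_preimage_add_right, hunit, Measure.addHaar_smul_of_nonneg _ hsqrt.le,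
    volume_sum_rpow_lt_one ι one_le_two, div_self two_ne_zero, one_add_one_eq_two,
    Real.Gamma_two, hΓ, hdim, pow_mul, Real.sq_sqrt hr.le, ← ENNReal.ofReal_mul (by positivity)]
  ring_nf

lemma sum_norm_sub_sq {ι : Type*} [Fintype ι] (x y : ι → ℂ) :
    ∑ k, ‖x k - y k‖ ^ 2 =
      ∑ k, ‖x k‖ ^ 2 + ∑ k, ‖y k‖ ^ 2 - 2 * (∑ k, x k * (starRingEnd ℂ) (y k)).re := by
  simp only [Complex.sq_norm, Complex.normSq_sub, Complex.re_sum, Finset.mul_sum,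
    Finset.sum_sub_distrib, Finset.sum_add_distrib]

section Siegel

variable {n : ℕ}

lemma mem_siegelDomain_iff_siegelRhoSelf_pos {z : SiegelSpace n} :
    z ∈ siegelDomain n ↔ 0 < siegelRhoSelf n z :=
  Iff.symm (sub_pos (a := z.2.im) (b := ∑ k, ‖z.1 k‖ ^ 2))

lemma siegelRho_im (z w : SiegelSpace n) :
    (siegelRho n z w).im = (w.2.re - z.2.re) / 2 - (∑ k, z.1 k * (starRingEnd ℂ) (w.1 k)).im := by
  simp [siegelRho]
  ring

lemma two_mul_siegelRho_re (z w : SiegelSpace n) :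
    2 * (siegelRho n z w).re =
      siegelRhoSelf n z + siegelRhoSelf n w + ∑ k, ‖z.1 k - w.1 k‖ ^ 2 := by
  simp [siegelRho, siegelRhoSelf, sum_norm_sub_sq]
  ring

lemma isOpen_siegelRho_ball (w : SiegelSpace n) (R : ℝ) :
    IsOpen {z | z ∈ siegelDomain n ∧ ‖siegelRho n z w‖ < R} := by
  have hρ : Continuous fun z => siegelRho n z w := by unfold siegelRho; fun_prop
  have hdom : Continuous fun z : SiegelSpace n => ∑ k, ‖z.1 k‖ ^ 2 := by fun_prop
  exact (isOpen_lt hdom (by fun_prop)).inter (isOpen_lt hρ.norm continuous_const)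

variable {w z : SiegelSpace n} {R : ℝ}

lemma siegelRhoSelf_add_sum_norm_sub_sq_lt (hw : w ∈ siegelDomain n)
    (h : ‖siegelRho n z w‖ < R) :
    siegelRhoSelf n z + ∑ k, ‖z.1 k - w.1 k‖ ^ 2 < 2 * R := by
  have hre := two_mul_siegelRho_re z w
  have hw' := mem_siegelDomain_iff_siegelRhoSelf_pos.mp hw
  linarith [re_le_norm (siegelRho n z w)]

lemma sum_norm_sub_sq_lt_of_norm_siegelRho_lt (hz : z ∈ siegelDomain n)
    (hw : w ∈ siegelDomain n) (h : ‖siegelRho n z w‖ < R) :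
    ∑ k, ‖z.1 k - w.1 k‖ ^ 2 < 2 * R := by
  linarith [siegelRhoSelf_add_sum_norm_sub_sq_lt hw h,
    mem_siegelDomain_iff_siegelRhoSelf_pos.mp hz]

lemma snd_mem_reProdIm_of_norm_siegelRho_lt (hz : z ∈ siegelDomain n) (hw : w ∈ siegelDomain n)
    (h : ‖siegelRho n z w‖ < R) :
    z.2 ∈ Ioo (w.2.re - 2 * (∑ k, z.1 k * (starRingEnd ℂ) (w.1 k)).im - 2 * R)
        (w.2.re - 2 * (∑ k, z.1 k * (starRingEnd ℂ) (w.1 k)).im + 2 * R) ×ℂ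
      Ioo (∑ k, ‖z.1 k‖ ^ 2) (∑ k, ‖z.1 k‖ ^ 2 + 2 * R) := by
  have him := abs_lt.mp ((abs_im_le_norm _).trans_lt h)
  have hself := siegelRhoSelf_add_sum_norm_sub_sq_lt hw h
  have hsq : 0 ≤ ∑ k, ‖z.1 k - w.1 k‖ ^ 2 := by positivity
  rw [siegelRho_im] at him
  unfold siegelRhoSelf at hself
  exact ⟨⟨by linarith, by linarith⟩, hz, by linarith⟩

lemma volume_slice_siegelRho_ball_le (hw : w ∈ siegelDomain n) (x : Fin (n - 1) → ℂ) :
    volume (Prod.mk x ⁻¹' {z | z ∈ siegelDomain n ∧ ‖siegelRho n z w‖ < R}) ≤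
      ENNReal.ofReal (4 * R) * ENNReal.ofReal (2 * R) := by
  calc _ ≤ volume (Ioo (w.2.re - 2 * (∑ k, x k * (starRingEnd ℂ) (w.1 k)).im - 2 * R)
          (w.2.re - 2 * (∑ k, x k * (starRingEnd ℂ) (w.1 k)).im + 2 * R) ×ℂ
        Ioo (∑ k, ‖x k‖ ^ 2) (∑ k, ‖x k‖ ^ 2 + 2 * R)) :=
        measure_mono fun y hy => snd_mem_reProdIm_of_norm_siegelRho_lt (z := (x, y)) hy.1 hw hy.2
    _ = _ := by rw [volume_reProdIm, Real.volume_Ioo, Real.volume_Ioo]; ring_nf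

end Siegel

/-- For every `w ∈ U` and `R > 0`, `|{z ∈ U : |ρ(z,w)| < R}| ≤ (2^{n+1} π^n / (n−1)!) R^{n+1}`. -/
theorem volume_rho_ball_le (n : ℕ) (hn : 0 < n) (w : SiegelSpace n)
    (hw : w ∈ siegelDomain n) (R : ℝ) (hR : 0 < R) :
    volume {z | z ∈ siegelDomain n ∧ ‖siegelRho n z w‖ < R} ≤
      ENNReal.ofReal (2 ^ (n + 1) * π ^ n / (Nat.factorial (n - 1) : ℝ) * R ^ (n + 1)) := by
  obtain ⟨m, rfl⟩ : ∃ m, n = m + 1 := Nat.exists_eq_add_one.mpr hn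
  calc volume {z | z ∈ siegelDomain (m + 1) ∧ ‖siegelRho (m + 1) z w‖ < R}
      ≤ ENNReal.ofReal (4 * R) * ENNReal.ofReal (2 * R) *
          volume {x : Fin m → ℂ | ∑ k, ‖x k - w.1 k‖ ^ 2 < 2 * R} :=
        Measure.prod_le_mul_of_forall_slice_le (isOpen_siegelRho_ball w R).measurableSet
          (fun _ hz => sum_norm_sub_sq_lt_of_norm_siegelRho_lt hz.1 hw hz.2)
          (fun x _ => volume_slice_siegelRho_ball_le hw x)
    _ = ENNReal.ofReal (2 * (2 ^ (m + 2) * π ^ m / m.factorial * R ^ (m + 2))) := by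
        rw [volume_sum_norm_sub_sq_lt _ (by positivity), Fintype.card_fin,
          ← ENNReal.ofReal_mul (by positivity), ← ENNReal.ofReal_mul (by positivity)]
        ring_nf
    _ ≤ ENNReal.ofReal (π * (2 ^ (m + 2) * π ^ m / m.factorial * R ^ (m + 2))) := by
        gcongr
        linarith [pi_gt_three]
    _ = _ := by simp only [Nat.add_sub_cancel]; ring_nf
end
end

section
/- Let n be a positive integer, 1 ≤ p < ∞, and let N be a positive integer with pN > n+1. Let i = (0', i) ∈ U and f_N(z) = ρ(z, i)^{−N}. Then f_N ∈ L^p(U) and ‖f_N‖_{L^p(U)}^p = 4π^n Γ(pN − n − 1) / Γ(pN/2)². -/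
open MeasureTheory Complex Real ENNReal

noncomputable section

open Set

/-!
Since `ρ(z, 𝐢) = -(i/2)(z_n + i)`, one has `|f_N|^p = (|z_n + i|/2)^(-s)` with `s = pN`, a function
of `z_n` alone. Integrating out `z'` over the ball `|z'|² < Im z_n` leaves the weight
`π^(n-1) (Im z_n)^(n-1) / (n-1)!` on the upper half-plane. There each negative power is written as
a Gamma integral, `r^(-a) = Γ(a)⁻¹ ∫₀^∞ t^(a-1) e^(-rt) dt`, and Tonelli is applied: the integral
over `Re z_n` becomes Gaussian and gives `(1 + y)^(1-s) √π Γ((s-1)/2) / Γ(s/2)`, the integral over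
`y = Im z_n` becomes the Beta integral `∫₀^∞ y^(n-1) (1+y)^(1-s) dy = (n-1)! Γ(s-n-1) / Γ(s-1)`, and
Legendre's duplication formula merges the Gamma factors.
-/

theorem lintegral_rpow_mul_exp_neg_mul_Ioi {a r : ℝ} (ha : 0 < a) (hr : 0 < r) :
    ∫⁻ t in Ioi (0 : ℝ), ENNReal.ofReal (t ^ (a - 1) * rexp (-(r * t))) =
      ENNReal.ofReal ((1 / r) ^ a * Real.Gamma a) := by
  have hint : IntegrableOn (fun t : ℝ => t ^ (a - 1) * rexp (-(r * t))) (Ioi 0) := by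
    simpa only [Real.rpow_one, neg_mul] using
      integrableOn_rpow_mul_exp_neg_mul_rpow (p := 1) (by linarith) one_pos hr
  rw [← ofReal_integral_eq_lintegral_ofReal hint, integral_rpow_mul_exp_neg_mul_Ioi ha hr]
  filter_upwards [ae_restrict_mem measurableSet_Ioi] with t ht
  exact mul_nonneg (rpow_nonneg (le_of_lt ht) _) (exp_pos _).le

theorem lintegral_mul_ofReal_rpow_neg {α : Type*} [MeasurableSpace α] {μ : Measure α} [SFinite μ]
    {g : α → ℝ≥0∞} {r : α → ℝ} (hg : Measurable g) (hr : Measurable r) (hr0 : ∀ᵐ x ∂μ, 0 < r x)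
    {a : ℝ} (ha : 0 < a) :
    ∫⁻ x, g x * ENNReal.ofReal (r x ^ (-a)) ∂μ =
      (ENNReal.ofReal (Real.Gamma a))⁻¹ * ∫⁻ t in Ioi (0 : ℝ),
        ENNReal.ofReal (t ^ (a - 1)) * ∫⁻ x, g x * ENNReal.ofReal (rexp (-(r x * t))) ∂μ := by
  have hΓ : ENNReal.ofReal (Real.Gamma a) ≠ 0 := by simpa using Real.Gamma_pos_of_pos ha
  have hpoint : ∀ x, 0 < r x → ENNReal.ofReal (r x ^ (-a)) = (ENNReal.ofReal (Real.Gamma a))⁻¹ *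
      ∫⁻ t in Ioi (0 : ℝ), ENNReal.ofReal (t ^ (a - 1)) * ENNReal.ofReal (rexp (-(r x * t))) := by
    intro x hx
    have hmul : ∀ t ∈ Ioi (0 : ℝ), ENNReal.ofReal (t ^ (a - 1)) *
        ENNReal.ofReal (rexp (-(r x * t))) = ENNReal.ofReal (t ^ (a - 1) * rexp (-(r x * t))) :=
      fun t ht => (ENNReal.ofReal_mul (rpow_nonneg (le_of_lt ht) _)).symm
    rw [setLIntegral_congr_fun measurableSet_Ioi hmul, lintegral_rpow_mul_exp_neg_mul_Ioi ha hx,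
      ENNReal.ofReal_mul (by positivity), mul_comm (ENNReal.ofReal _), ← mul_assoc,
      ENNReal.inv_mul_cancel hΓ ENNReal.ofReal_ne_top, one_mul, one_div, inv_rpow hx.le,
      ← rpow_neg hx.le]
  have hmeas : Measurable fun q : α × ℝ =>
      g q.1 * (ENNReal.ofReal (q.2 ^ (a - 1)) * ENNReal.ofReal (rexp (-(r q.1 * q.2)))) := by
    fun_prop
  calc ∫⁻ x, g x * ENNReal.ofReal (r x ^ (-a)) ∂μ
      = ∫⁻ x, (ENNReal.ofReal (Real.Gamma a))⁻¹ * (∫⁻ t in Ioi (0 : ℝ),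
          g x * (ENNReal.ofReal (t ^ (a - 1)) * ENNReal.ofReal (rexp (-(r x * t))))) ∂μ := by
        refine lintegral_congr_ae (hr0.mono fun x hx => ?_)
        dsimp only
        rw [hpoint x hx, lintegral_const_mul _ (by fun_prop)]
        ring
    _ = _ := by
        rw [lintegral_const_mul' _ _ (ENNReal.inv_ne_top.mpr hΓ),
          lintegral_lintegral_swap hmeas.aemeasurable]
        congr 1
        refine lintegral_congr fun t => ?_
        rw [← lintegral_const_mul _ (by fun_prop)]
        congr 1
        ext x
        ring

theorem lintegral_sq_add_sq_rpow_neg {a s : ℝ} (ha : 0 < a) (hs : 1 / 2 < s) :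
    ∫⁻ x : ℝ, ENNReal.ofReal ((x ^ 2 + a ^ 2) ^ (-s)) =
      ENNReal.ofReal (a ^ (1 - 2 * s) * √π * Real.Gamma (s - 1 / 2) / Real.Gamma s) := by
  have hsubord := lintegral_mul_ofReal_rpow_neg (μ := volume) (g := 1) (r := fun x => x ^ 2 + a ^ 2)
    measurable_const (by fun_prop) (ae_of_all _ fun x => by positivity) (by linarith : 0 < s)
  simp only [Pi.one_apply, one_mul] at hsubord
  have hgauss : ∀ t ∈ Ioi (0 : ℝ), ENNReal.ofReal (t ^ (s - 1)) *
      ∫⁻ x : ℝ, ENNReal.ofReal (rexp (-((x ^ 2 + a ^ 2) * t))) =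
        ENNReal.ofReal (√π) * ENNReal.ofReal (t ^ (s - 1 / 2 - 1) * rexp (-(a ^ 2 * t))) := by
    intro t (ht : 0 < t)
    have hsplit : ∀ x : ℝ, ENNReal.ofReal (rexp (-((x ^ 2 + a ^ 2) * t))) =
        ENNReal.ofReal (rexp (-(a ^ 2 * t))) * ENNReal.ofReal (rexp (-t * x ^ 2)) := fun x => by
      rw [← ENNReal.ofReal_mul (exp_pos _).le, ← Real.exp_add]; ring_nf
    simp_rw [hsplit]
    rw [lintegral_const_mul' _ _ ENNReal.ofReal_ne_top, ← ofReal_integral_eq_lintegral_ofReal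
      (integrable_exp_neg_mul_sq ht) (ae_of_all _ fun x => (exp_pos _).le), integral_gaussian,
      ← ENNReal.ofReal_mul (exp_pos _).le, ← ENNReal.ofReal_mul (by positivity),
      ← ENNReal.ofReal_mul (by positivity)]
    congr 1
    rw [Real.sqrt_div pi_pos.le, sqrt_eq_rpow t, div_eq_mul_inv, ← rpow_neg ht.le,
      show s - 1 / 2 - 1 = (s - 1) + -(1 / 2) by ring, rpow_add ht]
    ring
  have hΓ : 0 < Real.Gamma s := Real.Gamma_pos_of_pos (by linarith)
  rw [hsubord, setLIntegral_congr_fun measurableSet_Ioi hgauss,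
    lintegral_const_mul' _ _ ENNReal.ofReal_ne_top,
    lintegral_rpow_mul_exp_neg_mul_Ioi (by linarith) (by positivity),
    ← ENNReal.ofReal_mul (by positivity), ← ENNReal.ofReal_inv_of_pos hΓ,
    ← ENNReal.ofReal_mul (by positivity)]
  have hpow : (1 / a ^ 2) ^ (s - 1 / 2) = a ^ (1 - 2 * s) := by
    rw [one_div, ← Real.rpow_natCast, ← Real.rpow_neg_one, ← rpow_mul ha.le, ← rpow_mul ha.le]
    congr 1
    push_cast
    ring
  rw [hpow]
  congr 1
  field_simp

theorem lintegral_rpow_mul_one_add_rpow_neg_Ioi {b c : ℝ} (hb : 0 < b) (hbc : b < c) :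
    ∫⁻ y in Ioi (0 : ℝ), ENNReal.ofReal (y ^ (b - 1) * (1 + y) ^ (-c)) =
      ENNReal.ofReal (Real.Gamma b * Real.Gamma (c - b) / Real.Gamma c) := by
  have hsubord := lintegral_mul_ofReal_rpow_neg (μ := volume.restrict (Ioi 0))
    (g := fun y => ENNReal.ofReal (y ^ (b - 1))) (r := fun y => 1 + y) (by fun_prop) (by fun_prop)
    ((ae_restrict_mem measurableSet_Ioi).mono fun y (hy : 0 < y) => by positivity)
    (hb.trans hbc)
  have hexp : ∀ t ∈ Ioi (0 : ℝ), ENNReal.ofReal (t ^ (c - 1)) *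
      ∫⁻ y in Ioi (0 : ℝ), ENNReal.ofReal (y ^ (b - 1)) * ENNReal.ofReal (rexp (-((1 + y) * t))) =
        ENNReal.ofReal (Real.Gamma b) * ENNReal.ofReal (t ^ (c - b - 1) * rexp (-(1 * t))) := by
    intro t (ht : 0 < t)
    have hsplit : ∀ y ∈ Ioi (0 : ℝ), ENNReal.ofReal (y ^ (b - 1)) *
        ENNReal.ofReal (rexp (-((1 + y) * t))) =
          ENNReal.ofReal (rexp (-t)) * ENNReal.ofReal (y ^ (b - 1) * rexp (-(t * y))) :=
      fun y (hy : 0 < y) => by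
        rw [← ENNReal.ofReal_mul (by positivity), ← ENNReal.ofReal_mul (by positivity)]
        congr 1
        rw [show -((1 + y) * t) = -t + -(t * y) by ring, Real.exp_add]
        ring
    rw [setLIntegral_congr_fun measurableSet_Ioi hsplit, lintegral_const_mul' _ _
      ENNReal.ofReal_ne_top, lintegral_rpow_mul_exp_neg_mul_Ioi hb ht,
      ← ENNReal.ofReal_mul (by positivity), ← ENNReal.ofReal_mul (by positivity),
      ← ENNReal.ofReal_mul (by positivity)]
    congr 1
    rw [one_div, inv_rpow ht.le, ← rpow_neg ht.le, one_mul,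
      show c - b - 1 = (c - 1) + -b by ring, rpow_add ht]
    ring
  have hΓ : 0 < Real.Gamma c := Real.Gamma_pos_of_pos (hb.trans hbc)
  have hint : ∀ y ∈ Ioi (0 : ℝ), ENNReal.ofReal (y ^ (b - 1) * (1 + y) ^ (-c)) =
      ENNReal.ofReal (y ^ (b - 1)) * ENNReal.ofReal ((1 + y) ^ (-c)) := fun y (hy : 0 < y) =>
    ENNReal.ofReal_mul (by positivity)
  rw [setLIntegral_congr_fun measurableSet_Ioi hint, hsubord,
    setLIntegral_congr_fun measurableSet_Ioi hexp,
    lintegral_const_mul' _ _ ENNReal.ofReal_ne_top,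
    lintegral_rpow_mul_exp_neg_mul_Ioi (by linarith) one_pos,
    ← ENNReal.ofReal_mul (Real.Gamma_pos_of_pos hb).le, ← ENNReal.ofReal_inv_of_pos hΓ,
    ← ENNReal.ofReal_mul (by positivity)]
  congr 1
  rw [div_one, Real.one_rpow]
  field_simp

theorem volume_sum_norm_sq_lt {ι : Type*} [Fintype ι] {y : ℝ} (hy : 0 < y) :
    volume {x : ι → ℂ | ∑ k, ‖x k‖ ^ 2 < y} =
      ENNReal.ofReal (π ^ Fintype.card ι * y ^ Fintype.card ι / (Fintype.card ι).factorial) := by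
  rcases isEmpty_or_nonempty ι with hι | hι
  · have huniv : {x : ι → ℂ | ∑ k, ‖x k‖ ^ 2 < y} = univ := by simp [hy]
    rw [huniv, volume_pi, Measure.pi_univ]
    simp
  have hball : {x : ι → ℂ | ∑ k, ‖x k‖ ^ 2 < y} =
      {x : ι → ℂ | (∑ k, ‖x k‖ ^ (2 : ℝ)) ^ (1 / (2 : ℝ)) < √y} := by
    ext x
    simp only [Real.rpow_two, sqrt_eq_rpow]
    exact (rpow_lt_rpow_iff (by positivity) hy.le (by norm_num)).symm
  rw [hball, Complex.volume_sum_rpow_lt (ι := ι) (p := 2) one_le_two √y,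
    show (2 : ℝ) / 2 + 1 = 2 by norm_num, Real.Gamma_two, show 2 * (Fintype.card ι : ℝ) / 2 + 1 = (Fintype.card ι : ℕ) + 1 by ring,
    Real.Gamma_nat_eq_factorial, ← ENNReal.ofReal_pow (sqrt_nonneg _),
    ← ENNReal.ofReal_mul (by positivity), pow_mul, sq_sqrt hy.le]
  congr 1
  ring

theorem measurableSet_siegelDomain (n : ℕ) : MeasurableSet (siegelDomain n) :=
  measurableSet_lt (by fun_prop) (by fun_prop)

theorem setLIntegral_siegelDomain_comp_snd (n : ℕ) {G : ℂ → ℝ≥0∞} (hG : Measurable G) :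
    ∫⁻ z in siegelDomain n, G z.2 = ∫⁻ w in {w : ℂ | 0 < w.im},
      ENNReal.ofReal (π ^ (n - 1) * w.im ^ (n - 1) / (n - 1).factorial) * G w := by
  rw [← lintegral_indicator (measurableSet_siegelDomain n), Measure.volume_eq_prod,
    lintegral_prod_symm ((siegelDomain n).indicator fun z => G z.2)
      ((hG.comp measurable_snd).indicator (measurableSet_siegelDomain n)).aemeasurable,
    ← lintegral_indicator (measurableSet_lt measurable_const Complex.measurable_im)]
  refine lintegral_congr fun w => ?_
  have hslice : ∀ x, (siegelDomain n).indicator (fun z => G z.2) (x, w) =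
      {x : Fin (n - 1) → ℂ | ∑ k, ‖x k‖ ^ 2 < w.im}.indicator (fun _ => G w) x := fun x => rfl
  simp_rw [hslice]
  rw [lintegral_indicator_const (measurableSet_lt (by fun_prop) measurable_const)]
  rcases le_or_gt w.im 0 with hw | hw
  · have hempty : {x : Fin (n - 1) → ℂ | ∑ k, ‖x k‖ ^ 2 < w.im} = ∅ :=
      eq_empty_of_forall_notMem fun x hx => (hw.trans (by positivity)).not_gt hx
    rw [hempty, measure_empty, mul_zero,
      indicator_of_notMem (show w ∉ {w : ℂ | 0 < w.im} from not_lt.mpr hw)]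
  · rw [indicator_of_mem (show w ∈ {w : ℂ | 0 < w.im} from hw), volume_sum_norm_sq_lt hw,
      Fintype.card_fin, mul_comm]

theorem setLIntegral_im_pos {F : ℂ → ℝ≥0∞} (hF : Measurable F) :
    ∫⁻ w in {w : ℂ | 0 < w.im}, F w = ∫⁻ y in Ioi (0 : ℝ), ∫⁻ x : ℝ, F ⟨x, y⟩ := by
  have hpre : measurableEquivRealProd.symm ⁻¹' {w : ℂ | 0 < w.im} = univ ×ˢ Ioi (0 : ℝ) := by
    ext q; simp
  rw [← (volume_preserving_equiv_real_prod.symm _).setLIntegral_comp_preimage_emb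
    measurableEquivRealProd.symm.measurableEmbedding, hpre, Measure.volume_eq_prod,
    setLIntegral_prod_symm (fun q => F (measurableEquivRealProd.symm q))
      (hF.comp measurableEquivRealProd.symm.measurable).aemeasurable,
    Measure.restrict_univ]
  rfl

theorem norm_mk_add_I_rpow_neg (x y s : ℝ) :
    ‖(⟨x, y⟩ : ℂ) + I‖ ^ (-s) = (x ^ 2 + (y + 1) ^ 2) ^ (-(s / 2)) := by
  have hmk : (⟨x, y⟩ : ℂ) + I = ⟨x, y + 1⟩ := by apply Complex.ext <;> simp
  rw [hmk, Complex.norm_def, Complex.normSq_mk, sqrt_eq_rpow,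
    ← Real.rpow_mul (add_nonneg (mul_self_nonneg _) (mul_self_nonneg _))]
  congr 1 <;> ring

theorem setLIntegral_im_pos_pow_mul_norm_add_I_rpow_neg (m : ℕ) {s : ℝ} (hs : m + 2 < s) :
    ∫⁻ w in {w : ℂ | 0 < w.im}, ENNReal.ofReal (w.im ^ m * ‖w + I‖ ^ (-s)) =
      ENNReal.ofReal (π * 2 ^ (2 - s) * m.factorial * Real.Gamma (s - m - 2) /
        Real.Gamma (s / 2) ^ 2) := by
  have hΓ₁ : 0 < Real.Gamma (s - 1) := Real.Gamma_pos_of_pos (by linarith)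
  have hΓ₂ : 0 < Real.Gamma (s / 2) := Real.Gamma_pos_of_pos (by linarith)
  have hΓ₃ : 0 < Real.Gamma ((s - 1) / 2) := Real.Gamma_pos_of_pos (by linarith)
  have hΓ₄ : 0 < Real.Gamma (s - m - 2) := Real.Gamma_pos_of_pos (by linarith)
  set K := √π * Real.Gamma ((s - 1) / 2) / Real.Gamma (s / 2) with hK
  have hslice : ∀ y ∈ Ioi (0 : ℝ), ∫⁻ x : ℝ, ENNReal.ofReal (y ^ m * ‖(⟨x, y⟩ : ℂ) + I‖ ^ (-s)) =
      ENNReal.ofReal K * ENNReal.ofReal (y ^ ((m + 1 : ℝ) - 1) * (1 + y) ^ (-(s - 1))) := by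
    intro y (hy : 0 < y)
    simp_rw [norm_mk_add_I_rpow_neg, ENNReal.ofReal_mul (by positivity : 0 ≤ y ^ m)]
    rw [lintegral_const_mul' _ _ ENNReal.ofReal_ne_top,
      lintegral_sq_add_sq_rpow_neg (by positivity) (by linarith),
      ← ENNReal.ofReal_mul (by positivity), ← ENNReal.ofReal_mul (by positivity)]
    congr 1
    rw [add_sub_cancel_right, Real.rpow_natCast, hK, add_comm 1 y,
      show 1 - 2 * (s / 2) = -(s - 1) by ring, show s / 2 - 1 / 2 = (s - 1) / 2 by ring]
    ring
  have hdup : Real.Gamma ((s - 1) / 2) * Real.Gamma (s / 2) =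
      Real.Gamma (s - 1) * 2 ^ (2 - s) * √π := by
    convert Real.Gamma_mul_Gamma_add_half ((s - 1) / 2) using 3 <;> ring_nf
  rw [setLIntegral_im_pos (by fun_prop), setLIntegral_congr_fun measurableSet_Ioi hslice,
    lintegral_const_mul' _ _ ENNReal.ofReal_ne_top,
    lintegral_rpow_mul_one_add_rpow_neg_Ioi (by positivity) (by linarith),
    ← ENNReal.ofReal_mul (by positivity)]
  congr 1
  rw [Real.Gamma_nat_eq_factorial, show s - 1 - (m + 1) = s - m - 2 by ring, hK]
  field_simp
  rw [mul_assoc, hdup]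
  linear_combination Real.Gamma (s - 1) * 2 ^ (2 - s) * Real.mul_self_sqrt pi_pos.le

theorem setLIntegral_siegelDomain_norm_add_I_div_two_rpow_neg {n : ℕ} (hn : 0 < n) {s : ℝ}
    (hs : n + 1 < s) :
    ∫⁻ z in siegelDomain n, ENNReal.ofReal ((‖z.2 + I‖ / 2) ^ (-s)) =
      ENNReal.ofReal (4 * π ^ n * Real.Gamma (s - n - 1) / Real.Gamma (s / 2) ^ 2) := by
  obtain ⟨m, rfl⟩ : ∃ m, n = m + 1 := ⟨n - 1, by omega⟩
  have hweight : ∀ w ∈ {w : ℂ | 0 < w.im},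
      ENNReal.ofReal (π ^ m * w.im ^ m / m.factorial) * ENNReal.ofReal ((‖w + I‖ / 2) ^ (-s)) =
        ENNReal.ofReal (2 ^ s * π ^ m / m.factorial) *
          ENNReal.ofReal (w.im ^ m * ‖w + I‖ ^ (-s)) := fun w (hw : 0 < w.im) => by
    rw [← ENNReal.ofReal_mul (by positivity), ← ENNReal.ofReal_mul (by positivity),
      div_rpow (norm_nonneg _) zero_le_two, Real.rpow_neg zero_le_two]
    congr 1
    field_simp
  have hΓ : 0 < Real.Gamma (s / 2) := Real.Gamma_pos_of_pos (by push_cast at hs; linarith)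
  have h4 : (2 : ℝ) ^ s * 2 ^ (2 - s) = 4 := by
    rw [← Real.rpow_add two_pos, add_sub_cancel]
    norm_num
  rw [setLIntegral_siegelDomain_comp_snd (m + 1)
      (G := fun w => ENNReal.ofReal ((‖w + I‖ / 2) ^ (-s))) (by fun_prop), Nat.add_sub_cancel,
    setLIntegral_congr_fun (measurableSet_lt measurable_const Complex.measurable_im) hweight,
    lintegral_const_mul' _ _ ENNReal.ofReal_ne_top,
    setLIntegral_im_pos_pow_mul_norm_add_I_rpow_neg m (by push_cast at hs; linarith),
    ← ENNReal.ofReal_mul (by positivity)]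
  congr 1
  rw [show s - ↑(m + 1) - 1 = s - m - 2 by push_cast; ring, pow_succ]
  field_simp
  linear_combination π ^ m * π * Real.Gamma (s - m - 2) * h4

theorem norm_siegelRho_siegelPt (n : ℕ) (z : SiegelSpace n) :
    ‖siegelRho n z (siegelPt n)‖ = ‖z.2 + I‖ / 2 := by
  have hρ : siegelRho n z (siegelPt n) = -(I / 2) * (z.2 + I) := by
    simp only [siegelRho, siegelPt, conj_I, Pi.zero_apply, map_zero, mul_zero,
      Finset.sum_const_zero, sub_zero]
    ring
  rw [hρ, norm_mul, norm_neg, norm_div, norm_I, Complex.norm_two]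
  ring

theorem integrable_and_integral_eq_of_lintegral_ofReal_eq {α : Type*} [MeasurableSpace α]
    {μ : Measure α} {f : α → ℝ} (hf : AEStronglyMeasurable f μ) (hf0 : 0 ≤ᵐ[μ] f) {c : ℝ}
    (hc : 0 ≤ c) (h : ∫⁻ x, ENNReal.ofReal (f x) ∂μ = ENNReal.ofReal c) :
    Integrable f μ ∧ ∫ x, f x ∂μ = c :=
  ⟨⟨hf, (hasFiniteIntegral_iff_ofReal hf0).2 (h ▸ ENNReal.ofReal_lt_top)⟩,
    by rw [integral_eq_lintegral_of_nonneg_ae hf0 hf, h, ENNReal.toReal_ofReal hc]⟩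

theorem fN_memLp_and_norm_general (n : ℕ) (hn : 0 < n) (p : ℝ) (N : ℕ)
    (hpN : (n : ℝ) + 1 < p * N) :
    MemLp (fun z => siegelRho n z (siegelPt n) ^ (-(N : ℂ))) (ENNReal.ofReal p)
        (siegelMeasure n) ∧
      ∫ z in siegelDomain n, ‖siegelRho n z (siegelPt n) ^ (-(N : ℂ))‖ ^ p
        = 4 * π ^ n * Real.Gamma (p * N - n - 1) / Real.Gamma (p * N / 2) ^ 2 := by
  have hp : 0 < p := pos_of_mul_pos_left (lt_of_le_of_lt (by positivity) hpN) N.cast_nonneg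
  have hf : Measurable fun z => siegelRho n z (siegelPt n) ^ (-(N : ℂ)) := by
    unfold siegelRho; fun_prop
  have hnorm : ∀ z : SiegelSpace n, ‖siegelRho n z (siegelPt n) ^ (-(N : ℂ))‖ ^ p =
      (‖z.2 + I‖ / 2) ^ (-(p * N)) := fun z => by
    rw [show -(N : ℂ) = ((-N : ℝ) : ℂ) by push_cast; rfl, norm_cpow_real,
      ← Real.rpow_mul (norm_nonneg _), norm_siegelRho_siegelPt]
    ring_nf
  have hΓ₁ : 0 < Real.Gamma (p * N - n - 1) := Real.Gamma_pos_of_pos (by linarith)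
  have hΓ₂ : 0 < Real.Gamma (p * N / 2) := Real.Gamma_pos_of_pos (by linarith)
  have hlint : ∫⁻ z in siegelDomain n,
      ENNReal.ofReal (‖siegelRho n z (siegelPt n) ^ (-(N : ℂ))‖ ^ p) =
        ENNReal.ofReal (4 * π ^ n * Real.Gamma (p * N - n - 1) / Real.Gamma (p * N / 2) ^ 2) := by
    simp_rw [hnorm]
    exact setLIntegral_siegelDomain_norm_add_I_div_two_rpow_neg hn hpN
  obtain ⟨hint, hval⟩ := integrable_and_integral_eq_of_lintegral_ofReal_eq
    (hf.norm.pow_const p).aestronglyMeasurable (ae_of_all _ fun z => by positivity)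
    (by positivity) hlint
  refine ⟨(integrable_norm_rpow_iff hf.aestronglyMeasurable (by simpa using hp)
    ENNReal.ofReal_ne_top).1 ?_, hval⟩
  rwa [ENNReal.toReal_ofReal hp.le]

/-- For `1 ≤ p < ∞` and a positive integer `N` with `pN > n+1`, the function
`f_N(z) = ρ(z, 𝐢)^{−N}` belongs to `L^p(U)` and
`‖f_N‖_p^p = 4π^n Γ(pN − n − 1) / Γ(pN/2)²`. -/
theorem fN_memLp_and_norm (n : ℕ) (hn : 0 < n) (p : ℝ) (hp : 1 ≤ p) (N : ℕ) (hN : 0 < N)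
    (hpN : (n : ℝ) + 1 < p * N) :
    MemLp (fun z => siegelRho n z (siegelPt n) ^ (-(N : ℂ))) (ENNReal.ofReal p)
        (siegelMeasure n) ∧
      ∫ z in siegelDomain n, ‖siegelRho n z (siegelPt n) ^ (-(N : ℂ))‖ ^ p
        = 4 * π ^ n * Real.Gamma (p * N - n - 1) / Real.Gamma (p * N / 2) ^ 2 :=
  fN_memLp_and_norm_general n hn p N hpN
end
end

section
/- Let n be a positive integer and 0 < α < n+1. Then T_α is unbounded from L^{(n+1)/(n+1−α)}(U) to L^∞(U); that is, there is no constant C > 0 such that for every f ∈ L^{(n+1)/(n+1−α)}(U) the integral defining T_α f converges absolutely almost everywhere and ‖T_α f‖_{L^∞(U)} ≤ C‖f‖_{L^{(n+1)/(n+1−α)}(U)}. -/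
/-!
Write `y = Im w_n` and let `R = {w : |w_k|² < y/n, |Re w_n| < y, y > 2} ⊆ U`, whose slice at
height `y` has volume `≍ y ^ n` (the scaling of `U` under `w ↦ (t w', t² w_n)`). With
`s = n + 1 - α` and `p = (n + 1)/s > 1`, the function `f = y ^ (-s) / log y` on `R` satisfies
`∫ |f| ^ p ≍ ∫₂^∞ dy / (y (log y) ^ p) < ∞`. For fixed `z ∈ U` one has `|ρ(z, w)| ≤ C_z y` on
`R`, so `∫ |f(w)| |ρ(z, w)| ^ (-α) ≳ ∫₂^∞ dy / (y log y) = ∞`: the integral defining `T_α f`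
diverges absolutely at every point of `U`, a set of positive measure.
-/

open MeasureTheory Complex Real ENNReal

noncomputable section

open Set

theorem integrableOn_inv_mul_log_rpow_Ioi_iff {a s : ℝ} (ha : 1 < a) :
    IntegrableOn (fun y => y⁻¹ * Real.log y ^ s) (Ioi a) ↔ s < -1 := by
  rw [← integrableOn_Ioi_rpow_iff (Real.log_pos ha)]
  exact integrableOn_comp_log_Ioi (fun u => u ^ s) (by linarith)

theorem setLIntegral_ofReal_const_mul_inv_mul_log_rpow_Ioi_lt_top_iff {a c s : ℝ} (ha : 1 < a)
    (hc : 0 < c) :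
    ∫⁻ y in Ioi a, ENNReal.ofReal (c * (y⁻¹ * Real.log y ^ s)) < ⊤ ↔ s < -1 := by
  have hnonneg : ∀ y ∈ Ioi a, 0 ≤ c * (y⁻¹ * Real.log y ^ s) := fun y (hy : a < y) => by
    have := Real.log_pos (ha.trans hy)
    have : 0 < y := by linarith
    positivity
  rw [lt_top_iff_ne_top, lintegral_ofReal_ne_top_iff_integrable (by fun_prop)
    ((ae_restrict_iff' measurableSet_Ioi).2 (.of_forall hnonneg)),
    integrable_const_mul_iff (isUnit_iff_ne_zero.2 hc.ne')]
  exact integrableOn_inv_mul_log_rpow_Ioi_iff ha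

theorem pow_mul_rpow_neg_add_one {y : ℝ} (hy : 0 < y) (n : ℕ) :
    y ^ n * y ^ (-((n : ℝ) + 1)) = y⁻¹ := by
  rw [← Real.rpow_natCast, ← Real.rpow_add hy, ← Real.rpow_neg_one]
  ring_nf

theorem volume_univ_pi_ball {m : ℕ} (c : Fin m → ℂ) {r : ℝ} (hr : 0 ≤ r) :
    volume (univ.pi fun k => Metric.ball (c k) r) = ENNReal.ofReal (π * r ^ 2) ^ m := by
  simp_rw [volume_pi_pi, Complex.volume_ball]
  rw [Finset.prod_const, Finset.card_univ, Fintype.card_fin,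
    ENNReal.ofReal_mul Real.pi_pos.le, mul_comm, ← ENNReal.ofReal_pow hr, ← NNReal.coe_real_pi,
    ENNReal.ofReal_coe_nnreal]

def imCone (a : ℝ) : Set ℂ :=
  {c | |c.re| < c.im ∧ a < c.im}

theorem measurableSet_imCone (a : ℝ) : MeasurableSet (imCone a) := by
  unfold imCone
  measurability

theorem lintegral_indicator_imCone (a : ℝ) {H : ℝ → ℝ≥0∞} (hH : Measurable H) :
    ∫⁻ c, (imCone a).indicator (fun c => H c.im) c
      = ∫⁻ y in Ioi a, ENNReal.ofReal (2 * y) * H y := by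
  rw [← (Complex.volume_preserving_equiv_real_prod.symm).lintegral_comp_emb
    Complex.measurableEquivRealProd.symm.measurableEmbedding, Measure.volume_eq_prod,
    lintegral_prod_symm' _ (show Measurable fun q : ℝ × ℝ =>
      (imCone a).indicator (fun c => H c.im) (Complex.measurableEquivRealProd.symm q) from
      ((hH.comp measurable_im).indicator (measurableSet_imCone a)).comp
        Complex.measurableEquivRealProd.symm.measurable),
    ← lintegral_indicator measurableSet_Ioi]
  congr 1 with y
  by_cases hy : a < y
  · have hslice : ∀ x, (imCone a).indicator (fun c => H c.im)
        (Complex.measurableEquivRealProd.symm (x, y)) = (Ioo (-y) y).indicator (fun _ => H y) x :=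
      fun x => by
        simp [imCone, indicator_apply, abs_lt, hy, Complex.measurableEquivRealProd_symm_apply]
    simp_rw [hslice, lintegral_indicator_const measurableSet_Ioo, Real.volume_Ioo,
      indicator_of_mem (show y ∈ Ioi a from hy), mul_comm (H y)]
    ring_nf
  · simp [imCone, hy]

def siegelTube (n : ℕ) : Set (SiegelSpace n) :=
  {w | w.1 ∈ univ.pi (fun _ => Metric.ball 0 √(w.2.im / n)) ∧ w.2 ∈ imCone 2}

theorem measurableSet_siegelTube (n : ℕ) : MeasurableSet (siegelTube n) := by
  simp only [siegelTube, imCone, mem_univ_pi, mem_ball_zero_iff, ofPred_and, ofPred_forall]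
  measurability

theorem siegelTube_subset_siegelDomain (n : ℕ) : siegelTube n ⊆ siegelDomain n := by
  rintro w ⟨hw', -, hy⟩
  have hterm : ∀ k, ‖w.1 k‖ ^ 2 ≤ w.2.im / n := fun k =>
    ((Real.lt_sqrt (norm_nonneg _)).1 (mem_ball_zero_iff.1 (hw' k (mem_univ k)))).le
  calc ∑ k, ‖w.1 k‖ ^ 2 ≤ (n - 1 : ℕ) * (w.2.im / n) := by
        simpa using Finset.sum_le_sum fun k (_ : k ∈ Finset.univ) => hterm k
    _ < w.2.im := by
      rcases Nat.eq_zero_or_pos n with rfl | hn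
      · simp only [zero_tsub, CharP.cast_eq_zero, zero_mul]
        linarith
      · rw [mul_div_assoc', div_lt_iff₀ (by positivity), Nat.cast_pred hn]
        nlinarith

theorem lintegral_indicator_siegelTube_mk (n : ℕ) (M : ℝ → ℝ≥0∞) (c : ℂ) :
    ∫⁻ w', (siegelTube n).indicator (fun w => M w.2.im) (w', c)
      = (imCone 2).indicator (fun c => ENNReal.ofReal (π * (c.im / n)) ^ (n - 1) * M c.im) c := by
  by_cases hc : c ∈ imCone 2
  · have hslice : ∀ w', (siegelTube n).indicator (fun w => M w.2.im) (w', c)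
        = (univ.pi fun _ => Metric.ball 0 √(c.im / n)).indicator (fun _ => M c.im) w' := by
      intro w'
      by_cases hw' : w' ∈ univ.pi fun _ => Metric.ball (0 : ℂ) √(c.im / n)
      · rw [indicator_of_mem hw', indicator_of_mem (show (w', c) ∈ siegelTube n from ⟨hw', hc⟩)]
      · rw [indicator_of_notMem hw', indicator_of_notMem fun h => hw' h.1]
    simp_rw [hslice]
    rw [lintegral_indicator_const (MeasurableSet.univ_pi fun _ => measurableSet_ball),
      volume_univ_pi_ball (fun _ => 0) (Real.sqrt_nonneg _),
      Real.sq_sqrt (div_nonneg (by linarith [hc.2]) n.cast_nonneg), indicator_of_mem hc, mul_comm]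
  · rw [indicator_of_notMem hc]
    exact lintegral_eq_zero_of_ae_eq_zero <| .of_forall fun w' =>
      indicator_of_notMem (fun h => hc h.2) _

theorem lintegral_siegelTube {n : ℕ} (hn : 0 < n) {M : ℝ → ℝ≥0∞} (hM : Measurable M) :
    ∫⁻ w in siegelTube n, M w.2.im
      = ∫⁻ y in Ioi 2, ENNReal.ofReal (2 * (π / n) ^ (n - 1) * y ^ n) * M y := by
  rw [← lintegral_indicator (measurableSet_siegelTube n), Measure.volume_eq_prod,
    lintegral_prod_symm' _ (Measurable.indicator (by fun_prop) (measurableSet_siegelTube n))]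
  simp_rw [lintegral_indicator_siegelTube_mk]
  rw [lintegral_indicator_imCone 2
    (H := fun y => ENNReal.ofReal (π * (y / n)) ^ (n - 1) * M y) (by fun_prop)]
  refine setLIntegral_congr_fun measurableSet_Ioi fun y (hy : 2 < y) => ?_
  rw [← mul_assoc, ← ENNReal.ofReal_pow (by positivity), ← ENNReal.ofReal_mul (by positivity)]
  congr 2
  obtain ⟨m, rfl⟩ := Nat.exists_eq_add_one_of_ne_zero hn.ne'
  simp only [Nat.add_sub_cancel]
  ring

theorem isOpen_siegelDomain (n : ℕ) : IsOpen (siegelDomain n) :=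
  isOpen_lt (by fun_prop) (by fun_prop)

theorem siegelPt_mem_siegelDomain (n : ℕ) : siegelPt n ∈ siegelDomain n := by
  simp [siegelPt, siegelDomain]

theorem siegelMeasure_ne_zero (n : ℕ) : siegelMeasure n ≠ 0 := by
  rw [siegelMeasure, Ne, Measure.restrict_eq_zero]
  exact ((isOpen_siegelDomain n).measure_pos volume ⟨_, siegelPt_mem_siegelDomain n⟩).ne'

theorem re_siegelRho_pos {n : ℕ} {z w : SiegelSpace n} (hz : z ∈ siegelDomain n)
    (hw : w ∈ siegelDomain n) : 0 < (siegelRho n z w).re := by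
  have hinner : (∑ k, z.1 k * starRingEnd ℂ (w.1 k)).re
      ≤ (∑ k, ‖z.1 k‖ ^ 2 + ∑ k, ‖w.1 k‖ ^ 2) / 2 := by
    rw [re_sum, ← Finset.sum_add_distrib, Finset.sum_div]
    gcongr with k
    have hle := (re_le_norm (z.1 k * starRingEnd ℂ (w.1 k))).trans_eq (by rw [norm_mul, norm_conj])
    nlinarith [sq_nonneg (‖z.1 k‖ - ‖w.1 k‖)]
  have hre : (siegelRho n z w).re
      = (w.2.im + z.2.im) / 2 - (∑ k, z.1 k * starRingEnd ℂ (w.1 k)).re := by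
    simp only [siegelRho, sub_re, mul_re, div_ofNat_re, I_re, zero_div, conj_re, zero_mul,
      div_ofNat_im, I_im, one_div, sub_im, conj_im, zero_sub, re_sum, mul_neg, sub_neg_eq_add,
      sub_left_inj]
    ring
  have hz' : ∑ k, ‖z.1 k‖ ^ 2 < z.2.im := hz
  have hw' : ∑ k, ‖w.1 k‖ ^ 2 < w.2.im := hw
  linarith

theorem norm_siegelRho_le {n : ℕ} (z : SiegelSpace n) {w : SiegelSpace n}
    (hw : w ∈ siegelDomain n) (hre : |w.2.re| ≤ w.2.im) (him : 1 ≤ w.2.im) :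
    ‖siegelRho n z w‖ ≤ (1 + ‖z.2‖ + ∑ k, ‖z.1 k‖) * w.2.im := by
  have hwn : ‖w.2‖ ≤ 2 * w.2.im :=
    (norm_le_abs_re_add_abs_im _).trans (by rw [abs_of_pos (show 0 < w.2.im by linarith)]; linarith)
  have hwk : ∀ k, ‖w.1 k‖ ≤ w.2.im := fun k => by
    have hk : ‖w.1 k‖ ^ 2 ≤ ∑ j, ‖w.1 j‖ ^ 2 :=
      Finset.single_le_sum (f := fun j => ‖w.1 j‖ ^ 2) (fun j _ => by positivity)
        (Finset.mem_univ k)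
    have hw' : ∑ k, ‖w.1 k‖ ^ 2 < w.2.im := hw
    nlinarith [norm_nonneg (w.1 k)]
  calc ‖siegelRho n z w‖
      ≤ ‖I / 2 * (starRingEnd ℂ w.2 - z.2)‖ + ‖∑ k, z.1 k * starRingEnd ℂ (w.1 k)‖ :=
        norm_sub_le _ _
    _ ≤ (‖w.2‖ + ‖z.2‖) / 2 + ∑ k, ‖z.1 k‖ * w.2.im := by
        gcongr
        · rw [norm_mul, norm_div, norm_I, RCLike.norm_ofNat, div_mul_eq_mul_div, one_mul]
          gcongr
          exact (norm_sub_le _ _).trans_eq (by rw [norm_conj])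
        · refine (norm_sum_le _ _).trans (Finset.sum_le_sum fun k _ => ?_)
          rw [norm_mul, norm_conj]
          gcongr
          exact hwk k
    _ ≤ (1 + ‖z.2‖ + ∑ k, ‖z.1 k‖) * w.2.im := by
        rw [← Finset.sum_mul]
        nlinarith [norm_nonneg z.2]

def siegelTubeTestFunction (n : ℕ) (s : ℝ) : SiegelSpace n → ℂ :=
  (siegelTube n).indicator fun w => ((w.2.im ^ (-s) / Real.log w.2.im : ℝ) : ℂ)

theorem memLp_siegelTubeTestFunction {n : ℕ} (hn : 0 < n) {s p : ℝ} (hp : 1 < p)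
    (hsp : s * p = n + 1) :
    MemLp (siegelTubeTestFunction n s) (ENNReal.ofReal p) (siegelMeasure n) := by
  refine MemLp.mono_measure Measure.restrict_le_self ?_
  rw [siegelTubeTestFunction, memLp_indicator_iff_restrict (measurableSet_siegelTube n)]
  refine ⟨(Complex.measurable_ofReal.comp (by fun_prop)).aestronglyMeasurable, ?_⟩
  rw [eLpNorm_lt_top_iff_lintegral_rpow_enorm_lt_top (by simpa using hp.trans' one_pos)
    ENNReal.ofReal_ne_top, ENNReal.toReal_ofReal (by linarith)]
  have henorm : ∀ w : SiegelSpace n,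
      ‖((w.2.im ^ (-s) / Real.log w.2.im : ℝ) : ℂ)‖ₑ ^ p
        = ENNReal.ofReal (|w.2.im ^ (-s) / Real.log w.2.im| ^ p) := fun w => by
    rw [← ofReal_norm, norm_real, Real.norm_eq_abs, ENNReal.ofReal_rpow_of_nonneg (abs_nonneg _)
      (by linarith)]
  simp_rw [henorm]
  rw [lintegral_siegelTube hn (M := fun y => ENNReal.ofReal (|y ^ (-s) / Real.log y| ^ p))
    (by fun_prop)]
  have hc : 0 < 2 * (π / n) ^ (n - 1) := by positivity
  calc _ = ∫⁻ y in Ioi 2, ENNReal.ofReal (2 * (π / n) ^ (n - 1) * (y⁻¹ * Real.log y ^ (-p))) := by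
        refine setLIntegral_congr_fun measurableSet_Ioi fun y (hy : 2 < y) => ?_
        have hy0 : 0 < y := by linarith
        have hlog : 0 < Real.log y := Real.log_pos (by linarith)
        rw [← ENNReal.ofReal_mul (by positivity), abs_of_pos (by positivity),
          Real.div_rpow (by positivity) hlog.le, ← Real.rpow_mul hy0.le, neg_mul, hsp,
          Real.rpow_neg hlog.le, ← pow_mul_rpow_neg_add_one hy0 n]
        ring_nf
    _ < ⊤ := (setLIntegral_ofReal_const_mul_inv_mul_log_rpow_Ioi_lt_top_iff one_lt_two hc).2
        (by linarith)

theorem ofReal_le_enorm_siegelTubeTestFunction_div {n : ℕ} (s : ℝ) {α : ℝ} (hα : 0 ≤ α)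
    {z w : SiegelSpace n} (hz : z ∈ siegelDomain n) (hw : w ∈ siegelTube n) :
    ENNReal.ofReal
        (w.2.im ^ (-s) / Real.log w.2.im * ((1 + ‖z.2‖ + ∑ k, ‖z.1 k‖) * w.2.im) ^ (-α))
      ≤ ‖siegelTubeTestFunction n s w / siegelRho n z w ^ (α : ℂ)‖ₑ := by
  have hwU := siegelTube_subset_siegelDomain n hw
  obtain ⟨-, hre, hy⟩ := id hw
  have hρ : 0 < ‖siegelRho n z w‖ :=
    norm_pos_iff.2 fun h => (re_siegelRho_pos hz hwU).ne' (by simp [h])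
  have hg : 0 < w.2.im ^ (-s) / Real.log w.2.im :=
    div_pos (by positivity) (Real.log_pos (by linarith))
  rw [siegelTubeTestFunction, indicator_of_mem hw, ← ofReal_norm, norm_div, norm_real,
    norm_cpow_real, Real.norm_of_nonneg hg.le]
  refine ENNReal.ofReal_le_ofReal ?_
  rw [div_eq_mul_inv _ (‖siegelRho n z w‖ ^ α), Real.rpow_neg (x := _ * w.2.im) (by positivity)]
  exact mul_le_mul_of_nonneg_left (inv_anti₀ (by positivity) (Real.rpow_le_rpow hρ.le
    (norm_siegelRho_le z hwU hre.le (by linarith)) hα)) hg.le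

theorem lintegral_siegelTube_ofReal_rpow_div_log_mul_rpow_eq_top {n : ℕ} (hn : 0 < n) (α : ℝ)
    {C : ℝ} (hC : 0 < C) :
    ∫⁻ w in siegelTube n,
      ENNReal.ofReal (w.2.im ^ (-(n + 1 - α)) / Real.log w.2.im * (C * w.2.im) ^ (-α)) = ⊤ := by
  rw [lintegral_siegelTube hn
    (M := fun y => ENNReal.ofReal (y ^ (-(n + 1 - α)) / Real.log y * (C * y) ^ (-α)))
    (by fun_prop)]
  have hc : 0 < 2 * (π / n) ^ (n - 1) * C ^ (-α) := by positivity
  calc _ = ∫⁻ y in Ioi 2,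
        ENNReal.ofReal (2 * (π / n) ^ (n - 1) * C ^ (-α) * (y⁻¹ * Real.log y ^ (-1 : ℝ))) := by
        refine setLIntegral_congr_fun measurableSet_Ioi fun y (hy : 2 < y) => ?_
        have hy0 : 0 < y := by linarith
        rw [← ENNReal.ofReal_mul (by positivity), Real.mul_rpow hC.le hy0.le,
          Real.rpow_neg_one, ← pow_mul_rpow_neg_add_one hy0 n,
          show -((n : ℝ) + 1) = -(n + 1 - α) + -α by ring, Real.rpow_add hy0]
        ring_nf
    _ = ⊤ := not_lt_top_iff.1 fun h => lt_irrefl _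
        ((setLIntegral_ofReal_const_mul_inv_mul_log_rpow_Ioi_lt_top_iff one_lt_two hc).1 h)

theorem not_integrableOn_siegelTubeTestFunction_div {n : ℕ} (hn : 0 < n) {α : ℝ} (hα : 0 ≤ α)
    {z : SiegelSpace n} (hz : z ∈ siegelDomain n) :
    ¬ IntegrableOn (fun w => siegelTubeTestFunction n (n + 1 - α) w / siegelRho n z w ^ (α : ℂ))
      (siegelDomain n) := by
  intro hint
  refine hint.2.ne (top_unique ?_)
  calc ⊤ = _ := (lintegral_siegelTube_ofReal_rpow_div_log_mul_rpow_eq_top hn α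
        (C := 1 + ‖z.2‖ + ∑ k, ‖z.1 k‖) (by positivity)).symm
    _ ≤ ∫⁻ w in siegelTube n,
          ‖siegelTubeTestFunction n (n + 1 - α) w / siegelRho n z w ^ (α : ℂ)‖ₑ :=
        setLIntegral_mono' (measurableSet_siegelTube n) fun w hw =>
          ofReal_le_enorm_siegelTubeTestFunction_div _ hα hz hw
    _ ≤ _ := lintegral_mono_set (siegelTube_subset_siegelDomain n)

/-- For `0 < α < n+1`, `T_α` is unbounded from `L^{(n+1)/(n+1−α)}(U)` to `L^∞(U)`. -/
theorem Talpha_not_bounded_endpoint_infty (n : ℕ) (hn : 0 < n) (α : ℝ)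
    (hα0 : 0 < α) (hα1 : α < (n : ℝ) + 1) :
    ¬ TalphaBounded n α (ENNReal.ofReal (((n : ℝ) + 1) / ((n : ℝ) + 1 - α))) ⊤ := by
  rintro ⟨C, -, hbounded⟩
  have hs : 0 < (n : ℝ) + 1 - α := by linarith
  have hp : 1 < ((n : ℝ) + 1) / ((n : ℝ) + 1 - α) := (one_lt_div hs).2 (by linarith)
  obtain ⟨hae, -⟩ := hbounded _ (memLp_siegelTubeTestFunction hn hp (mul_div_cancel₀ _ hs.ne'))
  have : (ae (volume.restrict (siegelDomain n))).NeBot := ae_neBot.2 (siegelMeasure_ne_zero n)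
  obtain ⟨z, hz, hint⟩ :=
    ((ae_restrict_mem (isOpen_siegelDomain n).measurableSet).and hae).exists
  exact not_integrableOn_siegelTubeTestFunction_div hn hα0.le hz hint
end
end
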